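/- Let l > 7 be a prime with l ≡ 6 (mod 7) and l ≡ 2 (mod 3). Then the degree-8 polynomial f₀(x) has exactly 6 roots in 𝔽_l, and each of these roots is a simple root of f₀ over 𝔽_l. -/
import Mathlib

open Polynomial

/-- The polynomial `f₀(x) = (x²-x+1)(x⁶-11x⁵+30x⁴-15x³-10x²+5x+1)`. -/
noncomputable def f0poly (R : Type*) [CommRing R] : Polynomial R :=
  (X ^ 2 - X + 1) *
    (X ^ 6 - 11 * X ^ 5 + 30 * X ^ 4 - 15 * X ^ 3 - 10 * X ^ 2 + 5 * X + 1)

private lemma aux_mem_range (L : ℕ) [Fact L.Prime] {K : Type*} [Field K] (φ : ZMod L →+* K)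
    {x : K} (hx : x ^ L = x) : ∃ y : ZMod L, φ y = x := by
  classical
  by_contra hc
  push_neg at hc
  have hL : 1 < L := (Fact.out : L.Prime).one_lt
  set P : K[X] := X ^ L - X with hP
  have hdlt : (X : K[X]).natDegree < (X ^ L : K[X]).natDegree := by
    rw [natDegree_X_pow, natDegree_X]; omega
  have hPd : P.natDegree = L := by
    rw [hP, natDegree_sub_eq_left_of_natDegree_lt hdlt, natDegree_X_pow]
  have hP0 : P ≠ 0 := by
    intro h
    rw [h, natDegree_zero] at hPd
    omega
  have hroots : ∀ a : ZMod L, φ a ∈ P.roots := by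
    intro a
    refine Polynomial.mem_roots'.mpr ⟨hP0, ?_⟩
    show P.eval (φ a) = 0
    rw [hP]
    simp only [eval_sub, eval_pow, eval_X]
    rw [← map_pow, ZMod.pow_card, sub_self]
  have hxroot : x ∈ P.roots := by
    refine Polynomial.mem_roots'.mpr ⟨hP0, ?_⟩
    show P.eval x = 0
    rw [hP]
    simp only [eval_sub, eval_pow, eval_X]
    rw [hx, sub_self]
  set T : Finset K := insert x (Finset.univ.image φ) with hT
  have hxnot : x ∉ (Finset.univ.image φ) := by
    intro hmem
    obtain ⟨y, _, hy⟩ := Finset.mem_image.mp hmem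
    exact hc y hy
  have hsubT : T ⊆ P.roots.toFinset := by
    intro a ha
    rw [Multiset.mem_toFinset]
    rcases Finset.mem_insert.mp ha with h | h
    · rw [h]; exact hxroot
    · obtain ⟨y, _, hy⟩ := Finset.mem_image.mp h
      rw [← hy]; exact hroots y
  have hcardT : T.card = L + 1 := by
    rw [hT, Finset.card_insert_of_notMem hxnot,
      Finset.card_image_of_injective _ φ.injective, Finset.card_univ, ZMod.card]
  have h1 := Finset.card_le_card hsubT
  have h2 := Multiset.toFinset_card_le P.roots
  have h3 := Polynomial.card_roots' P
  omega

set_option maxHeartbeats 2000000 in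
/-- Proposition 2(a): for a prime `l > 7` with `l ≡ 6 (mod 7)` and `l ≡ 2 (mod 3)`,
the polynomial `f₀` has exactly `6` roots in `𝔽_l`, each of which is simple. -/
theorem f0_six_simple_roots (l : ℕ) [Fact (Nat.Prime l)] (hl : 7 < l)
    (h7 : l % 7 = 6) (h3 : l % 3 = 2) :
    (f0poly (ZMod l)).roots.toFinset.card = 6 ∧
      ∀ x : ZMod l, (f0poly (ZMod l)).IsRoot x →
        (f0poly (ZMod l)).rootMultiplicity x = 1 := by
  classical
  have h21 : l % 21 = 20 := by omega
  -- the quadratic field K = GF(l²) and a 21st root of unity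
  set K := GaloisField l 2 with hKdef
  set φ : ZMod l →+* K := algebraMap (ZMod l) K with hφdef
  have hK : Nat.card K = l ^ 2 := GaloisField.card l 2 (by norm_num)
  obtain ⟨g, hg⟩ := IsCyclic.exists_generator (α := Kˣ)
  have hgord : orderOf g = l ^ 2 - 1 := by
    rw [orderOf_eq_card_of_forall_mem_zpowers hg, Nat.card_units, hK]
  obtain ⟨k, hk⟩ : ∃ k, l = 21 * k + 20 := ⟨l / 21, by omega⟩
  have hmsq : l ^ 2 = 21 * (21 * k ^ 2 + 40 * k + 19) + 1 := by subst hk; ring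
  set m : ℕ := 21 * k ^ 2 + 40 * k + 19 with hmdef
  have hm : l ^ 2 - 1 = 21 * m := by omega
  have hzord : orderOf (g ^ m) = 21 := by
    rw [orderOf_pow' g (by omega : m ≠ 0), hgord, hm]
    have hgcd : Nat.gcd (21 * m) m = m := by
      rw [Nat.gcd_comm]; exact Nat.gcd_eq_left ⟨21, by ring⟩
    rw [hgcd, Nat.mul_div_cancel _ (by omega)]
  set z : K := ((g ^ m : Kˣ) : K) with hzdef
  have hz21 : z ^ 21 = 1 := by
    have h := pow_orderOf_eq_one (g ^ m)
    rw [hzord] at h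
    rw [hzdef, ← Units.val_pow_eq_pow_val, h, Units.val_one]
  have hznot : ∀ d : ℕ, 0 < d → d < 21 → z ^ d ≠ 1 := by
    intro d hd1 hd2 h
    have h' : (g ^ m) ^ d = 1 := Units.ext (by rw [Units.val_pow_eq_pow_val, Units.val_one]; exact h)
    have := Nat.le_of_dvd hd1 (hzord ▸ orderOf_dvd_of_pow_eq_one h')
    omega
  -- the 21st cyclotomic polynomial vanishes at z
  have hphi : z ^ 12 - z ^ 11 + z ^ 9 - z ^ 8 + z ^ 6 - z ^ 4 + z ^ 3 - z + 1 = 0 := by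
    have hprod : (z - 1) * (z ^ 2 + z + 1) * (z ^ 6 + z ^ 5 + z ^ 4 + z ^ 3 + z ^ 2 + z + 1) *
        (z ^ 12 - z ^ 11 + z ^ 9 - z ^ 8 + z ^ 6 - z ^ 4 + z ^ 3 - z + 1) = 0 := by
      linear_combination hz21
    have h1 : z - 1 ≠ 0 := sub_ne_zero.mpr (by simpa using hznot 1 (by norm_num) (by norm_num))
    have h3' : z ^ 2 + z + 1 ≠ 0 := by
      intro h
      exact hznot 3 (by norm_num) (by norm_num) (by linear_combination (z - 1) * h)
    have h7' : z ^ 6 + z ^ 5 + z ^ 4 + z ^ 3 + z ^ 2 + z + 1 ≠ 0 := by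
      intro h
      exact hznot 7 (by norm_num) (by norm_num) (by linear_combination (z - 1) * h)
    have hne := mul_ne_zero (mul_ne_zero h1 h3') h7'
    rcases mul_eq_zero.mp hprod with h | h
    · exact absurd h hne
    · exact h
  -- small integers are nonzero in K
  haveI : CharP K l := inferInstance
  have hcast : ∀ N : ℕ, N ∣ 42 → N ≠ 0 → ((N : ℕ) : K) ≠ 0 := by
    intro N hNd hN0 h
    have hl42 : l ∣ 42 := dvd_trans ((CharP.cast_eq_zero_iff K l N).mp h) hNd
    rw [show (42 : ℕ) = 2 * (3 * 7) by norm_num] at hl42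
    have hp : l.Prime := Fact.out
    rcases (Nat.Prime.dvd_mul hp).mp hl42 with h' | h'
    · exact absurd (Nat.le_of_dvd (by norm_num) h') (by omega)
    · rcases (Nat.Prime.dvd_mul hp).mp h' with h'' | h'' <;>
        exact absurd (Nat.le_of_dvd (by norm_num) h'') (by omega)
  -- power reduction
  have hred : ∀ a : ℕ, z ^ a = z ^ (a % 21) := by
    intro a
    conv_lhs => rw [← Nat.mod_add_div a 21]
    rw [pow_add, pow_mul, hz21, one_pow, mul_one]
  have hfz : (frobenius K l) z = z ^ 20 := by
    rw [frobenius_def, hred l, h21]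
  obtain ⟨a1, ha1def⟩ : ∃ w : K, w = (5) + (-1) * z + (2) * z ^ 2 + (-1) * z ^ 4 + (-1) * z ^ 7 + (1) * z ^ 8 + (1) * z ^ 9 + (1) * z ^ 11 := ⟨_, rfl⟩
  have ha1 : a1 ^ 2 - 11 * a1 + 25 = 0 := by
    rw [ha1def]
    linear_combination ((1) * z) * hz21 + ((-5) + (-3) * z + (-4) * z ^ 2 + (-3) * z ^ 3 + (3) * z ^ 5 + (3) * z ^ 6 + (4) * z ^ 7 + (2) * z ^ 8) * hphi
  obtain ⟨a2, ha2def⟩ : ∃ w : K, w = (6) + (1) * z + (-2) * z ^ 2 + (1) * z ^ 4 + (1) * z ^ 7 + (-1) * z ^ 8 + (-1) * z ^ 9 + (-1) * z ^ 11 := ⟨_, rfl⟩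
  have ha2 : a2 ^ 2 - 11 * a2 + 25 = 0 := by
    rw [ha2def]
    linear_combination ((1) * z) * hz21 + ((-5) + (-3) * z + (-4) * z ^ 2 + (-3) * z ^ 3 + (3) * z ^ 5 + (3) * z ^ 6 + (4) * z ^ 7 + (2) * z ^ 8) * hphi
  obtain ⟨w1, hw1⟩ : ∃ w : K, w = 2 + z + z ^ 20 - z ^ 4 - z ^ 17 - z ^ 5 - z ^ 16 := ⟨_, rfl⟩
  have hcub1 : w1 ^ 3 - a1 * w1 ^ 2 + (a1 - 3) * w1 + 1 = 0 := by
    rw [hw1, ha1def]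
    linear_combination ((12) + (7) * z + (-11) * z ^ 2 + (-6) * z ^ 3 + (-5) * z ^ 4 + (-1) * z ^ 5 + (11) * z ^ 6 + (3) * z ^ 7 + (-6) * z ^ 8 + (-7) * z ^ 9 + (-6) * z ^ 10 + (1) * z ^ 11 + (11) * z ^ 12 + (9) * z ^ 13 + (-1) * z ^ 14 + (-7) * z ^ 15 + (-17) * z ^ 16 + (-12) * z ^ 17 + (3) * z ^ 18 + (6) * z ^ 19 + (12) * z ^ 20 + (1) * z ^ 21 + (-4) * z ^ 22 + (-4) * z ^ 23 + (2) * z ^ 25 + (3) * z ^ 26 + (-4) * z ^ 28 + (-3) * z ^ 29 + (-2) * z ^ 30 + (3) * z ^ 31 + (6) * z ^ 32 + (3) * z ^ 33 + (-3) * z ^ 35 + (-3) * z ^ 36 + (1) * z ^ 39) * hz21 + ((5) + (8) * z + (-3) * z ^ 2 + (-18) * z ^ 3 + (-20) * z ^ 4 + (-6) * z ^ 5 + (12) * z ^ 6 + (16) * z ^ 7 + (7) * z ^ 8) * hphi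
  have hroot1 : w1 ^ 6 - 11 * w1 ^ 5 + 30 * w1 ^ 4 - 15 * w1 ^ 3 - 10 * w1 ^ 2 + 5 * w1 + 1 = 0 := by
    linear_combination (w1 ^ 3 - (11 - a1) * w1 ^ 2 + (8 - a1) * w1 + 1) * hcub1 + (w1 ^ 2 - w1) ^ 2 * ha1
  obtain ⟨w2, hw2⟩ : ∃ w : K, w = 2 + z ^ 2 + z ^ 19 - z ^ 8 - z ^ 13 - z ^ 10 - z ^ 11 := ⟨_, rfl⟩
  have hcub2 : w2 ^ 3 - a2 * w2 ^ 2 + (a2 - 3) * w2 + 1 = 0 := by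
    rw [hw2, ha2def]
    linear_combination ((8) + (-5) * z + (16) * z ^ 2 + (-3) * z ^ 3 + (-1) * z ^ 4 + (2) * z ^ 5 + (-2) * z ^ 6 + (-11) * z ^ 8 + (4) * z ^ 9 + (-13) * z ^ 10 + (-9) * z ^ 11 + (2) * z ^ 12 + (-12) * z ^ 13 + (1) * z ^ 14 + (4) * z ^ 16 + (1) * z ^ 18 + (13) * z ^ 19 + (-1) * z ^ 20 + (5) * z ^ 21 + (4) * z ^ 22 + (2) * z ^ 24 + (-2) * z ^ 25 + (1) * z ^ 26 + (-3) * z ^ 27 + (-2) * z ^ 28 + (-3) * z ^ 30 + (1) * z ^ 36) * hz21 + ((-1) + (-8) * z + (3) * z ^ 2 + (-2) * z ^ 3 + (8) * z ^ 4 + (-2) * z ^ 5 + (2) * z ^ 6 + (-2) * z ^ 7 + (3) * z ^ 8) * hphi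
  have hroot2 : w2 ^ 6 - 11 * w2 ^ 5 + 30 * w2 ^ 4 - 15 * w2 ^ 3 - 10 * w2 ^ 2 + 5 * w2 + 1 = 0 := by
    linear_combination (w2 ^ 3 - (11 - a2) * w2 ^ 2 + (8 - a2) * w2 + 1) * hcub2 + (w2 ^ 2 - w2) ^ 2 * ha2
  obtain ⟨w3, hw3⟩ : ∃ w : K, w = 2 + z ^ 4 + z ^ 17 - z ^ 16 - z ^ 5 - z ^ 20 - z := ⟨_, rfl⟩
  have hcub3 : w3 ^ 3 - a1 * w3 ^ 2 + (a1 - 3) * w3 + 1 = 0 := by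
    rw [hw3, ha1def]
    linear_combination ((16) + (-3) * z + (-9) * z ^ 2 + (-2) * z ^ 3 + (19) * z ^ 4 + (-15) * z ^ 5 + (-1) * z ^ 6 + (3) * z ^ 7 + (4) * z ^ 8 + (-7) * z ^ 9 + (2) * z ^ 10 + (5) * z ^ 11 + (-5) * z ^ 12 + (1) * z ^ 13 + (1) * z ^ 14 + (5) * z ^ 15 + (-17) * z ^ 16 + (10) * z ^ 17 + (1) * z ^ 18 + (6) * z ^ 19 + (-14) * z ^ 20 + (5) * z ^ 21 + (2) * z ^ 23 + (-4) * z ^ 24 + (2) * z ^ 25 + (-1) * z ^ 26 + (2) * z ^ 28 + (-3) * z ^ 29 + (-3) * z ^ 31 + (6) * z ^ 32 + (-3) * z ^ 33 + (-3) * z ^ 35 + (3) * z ^ 36 + (-1) * z ^ 39) * hz21 + ((9) + (14) * z + (-1) * z ^ 2 + (-6) * z ^ 3 + (2) * z ^ 4 + (6) * z ^ 5 + (-4) * z ^ 6 + (-12) * z ^ 7 + (-7) * z ^ 8) * hphi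
  have hroot3 : w3 ^ 6 - 11 * w3 ^ 5 + 30 * w3 ^ 4 - 15 * w3 ^ 3 - 10 * w3 ^ 2 + 5 * w3 + 1 = 0 := by
    linear_combination (w3 ^ 3 - (11 - a1) * w3 ^ 2 + (8 - a1) * w3 + 1) * hcub3 + (w3 ^ 2 - w3) ^ 2 * ha1
  obtain ⟨w4, hw4⟩ : ∃ w : K, w = 2 + z ^ 5 + z ^ 16 - z ^ 20 - z - z ^ 4 - z ^ 17 := ⟨_, rfl⟩
  have hcub4 : w4 ^ 3 - a1 * w4 ^ 2 + (a1 - 3) * w4 + 1 = 0 := by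
    rw [hw4, ha1def]
    linear_combination ((6) + (-3) * z + (-1) * z ^ 2 + (-2) * z ^ 3 + (-7) * z ^ 4 + (13) * z ^ 5 + (-11) * z ^ 6 + (11) * z ^ 7 + (2) * z ^ 8 + (-9) * z ^ 9 + (6) * z ^ 10 + (-3) * z ^ 11 + (-5) * z ^ 12 + (5) * z ^ 13 + (3) * z ^ 14 + (-7) * z ^ 15 + (13) * z ^ 16 + (-8) * z ^ 17 + (-1) * z ^ 18 + (2) * z ^ 19 + (-10) * z ^ 20 + (5) * z ^ 21 + (-4) * z ^ 22 + (4) * z ^ 23 + (2) * z ^ 24 + (-2) * z ^ 25 + (3) * z ^ 26 + (-2) * z ^ 27 + (-4) * z ^ 28 + (3) * z ^ 29 + (-2) * z ^ 30 + (-3) * z ^ 31 + (6) * z ^ 32 + (-3) * z ^ 33 + (3) * z ^ 35 + (-3) * z ^ 36 + (-1) * z ^ 39) * hz21 + ((-1) + (4) * z + (-3) * z ^ 2 + (2) * z ^ 3 + (-4) * z ^ 4 + (6) * z ^ 5 + (-2) * z ^ 6 + (4) * z ^ 7 + (-5) * z ^ 8) * hphi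
  have hroot4 : w4 ^ 6 - 11 * w4 ^ 5 + 30 * w4 ^ 4 - 15 * w4 ^ 3 - 10 * w4 ^ 2 + 5 * w4 + 1 = 0 := by
    linear_combination (w4 ^ 3 - (11 - a1) * w4 ^ 2 + (8 - a1) * w4 + 1) * hcub4 + (w4 ^ 2 - w4) ^ 2 * ha1
  obtain ⟨w5, hw5⟩ : ∃ w : K, w = 2 + z ^ 8 + z ^ 13 - z ^ 11 - z ^ 10 - z ^ 19 - z ^ 2 := ⟨_, rfl⟩
  have hcub5 : w5 ^ 3 - a2 * w5 ^ 2 + (a2 - 3) * w5 + 1 = 0 := by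
    rw [hw5, ha2def]
    linear_combination ((2) + (3) * z + (1) * z ^ 3 + (5) * z ^ 4 + (-12) * z ^ 6 + (-6) * z ^ 7 + (15) * z ^ 8 + (6) * z ^ 9 + (-9) * z ^ 10 + (-9) * z ^ 11 + (10) * z ^ 13 + (-3) * z ^ 14 + (-6) * z ^ 15 + (4) * z ^ 16 + (8) * z ^ 17 + (1) * z ^ 18 + (-13) * z ^ 19 + (-3) * z ^ 20 + (5) * z ^ 21 + (4) * z ^ 22 + (-4) * z ^ 24 + (4) * z ^ 25 + (1) * z ^ 26 + (-3) * z ^ 27 + (-2) * z ^ 28 + (3) * z ^ 30 + (-1) * z ^ 36) * hz21 + ((-7) + (-6) * z + (7) * z ^ 2 + (18) * z ^ 3 + (14) * z ^ 4 + (-12) * z ^ 6 + (-10) * z ^ 7 + (-3) * z ^ 8) * hphi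
  have hroot5 : w5 ^ 6 - 11 * w5 ^ 5 + 30 * w5 ^ 4 - 15 * w5 ^ 3 - 10 * w5 ^ 2 + 5 * w5 + 1 = 0 := by
    linear_combination (w5 ^ 3 - (11 - a2) * w5 ^ 2 + (8 - a2) * w5 + 1) * hcub5 + (w5 ^ 2 - w5) ^ 2 * ha2
  obtain ⟨w6, hw6⟩ : ∃ w : K, w = 2 + z ^ 10 + z ^ 11 - z ^ 19 - z ^ 2 - z ^ 8 - z ^ 13 := ⟨_, rfl⟩
  have hcub6 : w6 ^ 3 - a2 * w6 ^ 2 + (a2 - 3) * w6 + 1 = 0 := by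
    rw [hw6, ha2def]
    linear_combination ((-2) + (-1) * z + (-7) * z ^ 3 + (-1) * z ^ 4 + (10) * z ^ 5 + (-10) * z ^ 7 + (-7) * z ^ 8 + (13) * z ^ 10 + (13) * z ^ 11 + (-4) * z ^ 12 + (-12) * z ^ 13 + (-5) * z ^ 14 + (4) * z ^ 15 + (10) * z ^ 16 + (4) * z ^ 17 + (-9) * z ^ 18 + (-13) * z ^ 19 + (-3) * z ^ 20 + (5) * z ^ 21 + (8) * z ^ 22 + (-4) * z ^ 24 + (-2) * z ^ 25 + (1) * z ^ 26 + (3) * z ^ 27 + (4) * z ^ 28 + (-3) * z ^ 30 + (-1) * z ^ 36) * hz21 + ((-11) + (-14) * z + (-1) * z ^ 2 + (6) * z ^ 3 + (-4) * z ^ 5 + (4) * z ^ 6 + (12) * z ^ 7 + (9) * z ^ 8) * hphi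
  have hroot6 : w6 ^ 6 - 11 * w6 ^ 5 + 30 * w6 ^ 4 - 15 * w6 ^ 3 - 10 * w6 ^ 2 + 5 * w6 + 1 = 0 := by
    linear_combination (w6 ^ 3 - (11 - a2) * w6 ^ 2 + (8 - a2) * w6 + 1) * hcub6 + (w6 ^ 2 - w6) ^ 2 * ha2
  have hrne12 : w1 ≠ w2 := by
    intro hcontra
    apply hcast 7 (by norm_num) (by norm_num)
    have hcert : (((2 + z + z ^ 20 - z ^ 4 - z ^ 17 - z ^ 5 - z ^ 16) : K) - (2 + z ^ 2 + z ^ 19 - z ^ 8 - z ^ 13 - z ^ 10 - z ^ 11)) * ((-7) + (-6) * z + (12) * z ^ 2 + (8) * z ^ 3 + (-12) * z ^ 4 + (-4) * z ^ 5 + (2) * z ^ 6 + (-4) * z ^ 7 + (2) * z ^ 8 + (8) * z ^ 9 + (-2) * z ^ 10 + (-6) * z ^ 11) = ((7 : ℕ) : K) := by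
      push_cast
      linear_combination ((-7) + (-14) * z + (-13) * z ^ 2 + (12) * z ^ 3 + (22) * z ^ 4 + (14) * z ^ 5 + (-2) * z ^ 6 + (-12) * z ^ 7 + (-7) * z ^ 8 + (6) * z ^ 9 + (8) * z ^ 10 + (-6) * z ^ 11 + (-22) * z ^ 12 + (-14) * z ^ 13 + (2) * z ^ 14 + (12) * z ^ 15 + (14) * z ^ 16 + (8) * z ^ 17 + (-2) * z ^ 18 + (-6) * z ^ 19) * hphi
    rw [← hcert, ← hw1, ← hw2, hcontra, sub_self, zero_mul]
  have hrne13 : w1 ≠ w3 := by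
    intro hcontra
    apply hcast 14 (by norm_num) (by norm_num)
    have hcert : (((2 + z + z ^ 20 - z ^ 4 - z ^ 17 - z ^ 5 - z ^ 16) : K) - (2 + z ^ 4 + z ^ 17 - z ^ 16 - z ^ 5 - z ^ 20 - z)) * ((7) + (-2) * z + (-3) * z ^ 2 + (5) * z ^ 3 + (-4) * z ^ 4 + (1) * z ^ 5 + (3) * z ^ 6 + (1) * z ^ 7 + (-4) * z ^ 8 + (-2) * z ^ 9 + (4) * z ^ 10 + (-2) * z ^ 11) = ((14 : ℕ) : K) := by
      push_cast
      linear_combination ((-14) + (-4) * z ^ 2 + (4) * z ^ 3 + (-14) * z ^ 4 + (-14) * z ^ 5 + (14) * z ^ 7 + (14) * z ^ 8 + (-14) * z ^ 10 + (14) * z ^ 12 + (14) * z ^ 13 + (-14) * z ^ 15 + (4) * z ^ 18 + (-4) * z ^ 19) * hphi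
    rw [← hcert, ← hw1, ← hw3, hcontra, sub_self, zero_mul]
  have hrne14 : w1 ≠ w4 := by
    intro hcontra
    apply hcast 14 (by norm_num) (by norm_num)
    have hcert : (((2 + z + z ^ 20 - z ^ 4 - z ^ 17 - z ^ 5 - z ^ 16) : K) - (2 + z ^ 5 + z ^ 16 - z ^ 20 - z - z ^ 4 - z ^ 17)) * ((1) * z + (-2) * z ^ 2 + (8) * z ^ 3 + (-5) * z ^ 4 + (-4) * z ^ 5 + (2) * z ^ 6 + (3) * z ^ 7 + (-5) * z ^ 8 + (1) * z ^ 9 + (5) * z ^ 10 + (-6) * z ^ 11) = ((14 : ℕ) : K) := by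
      push_cast
      linear_combination ((-14) + (-14) * z + (-12) * z ^ 2 + (-2) * z ^ 3 + (14) * z ^ 4 + (2) * z ^ 5 + (-4) * z ^ 6 + (2) * z ^ 7 + (2) * z ^ 8 + (10) * z ^ 9 + (2) * z ^ 10 + (2) * z ^ 11 + (-4) * z ^ 12 + (2) * z ^ 13 + (2) * z ^ 14 + (10) * z ^ 15 + (2) * z ^ 16 + (-2) * z ^ 18 + (-12) * z ^ 19) * hphi
    rw [← hcert, ← hw1, ← hw4, hcontra, sub_self, zero_mul]
  have hrne15 : w1 ≠ w5 := by
    intro hcontra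
    apply hcast 21 (by norm_num) (by norm_num)
    have hcert : (((2 + z + z ^ 20 - z ^ 4 - z ^ 17 - z ^ 5 - z ^ 16) : K) - (2 + z ^ 8 + z ^ 13 - z ^ 11 - z ^ 10 - z ^ 19 - z ^ 2)) * ((7) + (8) * z + (-16) * z ^ 2 + (8) * z ^ 3 + (2) * z ^ 4 + (-4) * z ^ 5 + (2) * z ^ 6 + (10) * z ^ 7 + (-12) * z ^ 8 + (-6) * z ^ 9 + (12) * z ^ 10 + (-6) * z ^ 11) = ((21 : ℕ) : K) := by
      push_cast
      linear_combination ((-21) + (-14) * z + (1) * z ^ 2 + (14) * z ^ 3 + (-8) * z ^ 4 + (-28) * z ^ 5 + (-14) * z ^ 6 + (28) * z ^ 7 + (21) * z ^ 8 + (-8) * z ^ 9 + (-20) * z ^ 10 + (8) * z ^ 11 + (34) * z ^ 12 + (14) * z ^ 13 + (-14) * z ^ 14 + (-14) * z ^ 15 + (6) * z ^ 17 + (-6) * z ^ 19) * hphi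
    rw [← hcert, ← hw1, ← hw5, hcontra, sub_self, zero_mul]
  have hrne16 : w1 ≠ w6 := by
    intro hcontra
    apply hcast 7 (by norm_num) (by norm_num)
    have hcert : (((2 + z + z ^ 20 - z ^ 4 - z ^ 17 - z ^ 5 - z ^ 16) : K) - (2 + z ^ 10 + z ^ 11 - z ^ 19 - z ^ 2 - z ^ 8 - z ^ 13)) * ((7) + (-12) * z + (10) * z ^ 2 + (2) * z ^ 3 + (-10) * z ^ 4 + (6) * z ^ 5 + (4) * z ^ 6 + (-8) * z ^ 7 + (4) * z ^ 8 + (2) * z ^ 9 + (-4) * z ^ 10 + (2) * z ^ 11) = ((7 : ℕ) : K) := by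
      push_cast
      linear_combination ((-7) + (-5) * z ^ 2 + (-2) * z ^ 4 + (7) * z ^ 8 + (2) * z ^ 9 + (-2) * z ^ 10 + (-2) * z ^ 11 + (2) * z ^ 12 + (-2) * z ^ 17 + (2) * z ^ 19) * hphi
    rw [← hcert, ← hw1, ← hw6, hcontra, sub_self, zero_mul]
  have hrne23 : w2 ≠ w3 := by
    intro hcontra
    apply hcast 7 (by norm_num) (by norm_num)
    have hcert : (((2 + z ^ 2 + z ^ 19 - z ^ 8 - z ^ 13 - z ^ 10 - z ^ 11) : K) - (2 + z ^ 4 + z ^ 17 - z ^ 16 - z ^ 5 - z ^ 20 - z)) * ((-7) + (-4) * z + (-6) * z ^ 2 + (-4) * z ^ 3 + (6) * z ^ 4 + (2) * z ^ 5 + (6) * z ^ 6 + (2) * z ^ 7 + (-8) * z ^ 8 + (-4) * z ^ 9 + (-6) * z ^ 10 + (-4) * z ^ 11) = ((7 : ℕ) : K) := by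
      push_cast
      linear_combination ((-7) + (-14) * z + (-25) * z ^ 2 + (-28) * z ^ 3 + (-24) * z ^ 4 + (-14) * z ^ 5 + (6) * z ^ 6 + (22) * z ^ 7 + (35) * z ^ 8 + (38) * z ^ 9 + (32) * z ^ 10 + (32) * z ^ 11 + (24) * z ^ 12 + (14) * z ^ 13 + (-6) * z ^ 14 + (-22) * z ^ 15 + (-28) * z ^ 16 + (-24) * z ^ 17 + (-14) * z ^ 18 + (-4) * z ^ 19) * hphi
    rw [← hcert, ← hw2, ← hw3, hcontra, sub_self, zero_mul]
  have hrne24 : w2 ≠ w4 := by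
    intro hcontra
    apply hcast 21 (by norm_num) (by norm_num)
    have hcert : (((2 + z ^ 2 + z ^ 19 - z ^ 8 - z ^ 13 - z ^ 10 - z ^ 11) : K) - (2 + z ^ 5 + z ^ 16 - z ^ 20 - z - z ^ 4 - z ^ 17)) * ((7) + (-4) * z + (8) * z ^ 2 + (10) * z ^ 3 + (-8) * z ^ 4 + (-12) * z ^ 5 + (6) * z ^ 6 + (2) * z ^ 7 + (-8) * z ^ 8 + (10) * z ^ 9 + (8) * z ^ 10 + (-4) * z ^ 11) = ((21 : ℕ) : K) := by
      push_cast
      linear_combination ((-21) + (-14) * z + (-11) * z ^ 2 + (14) * z ^ 3 + (32) * z ^ 4 + (20) * z ^ 5 + (8) * z ^ 6 + (-15) * z ^ 8 + (-16) * z ^ 9 + (-32) * z ^ 10 + (-32) * z ^ 11 + (-16) * z ^ 12 + (-8) * z ^ 13 + (14) * z ^ 14 + (22) * z ^ 15 + (20) * z ^ 16 + (18) * z ^ 17 + (-4) * z ^ 19) * hphi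
    rw [← hcert, ← hw2, ← hw4, hcontra, sub_self, zero_mul]
  have hrne25 : w2 ≠ w5 := by
    intro hcontra
    apply hcast 14 (by norm_num) (by norm_num)
    have hcert : (((2 + z ^ 2 + z ^ 19 - z ^ 8 - z ^ 13 - z ^ 10 - z ^ 11) : K) - (2 + z ^ 8 + z ^ 13 - z ^ 11 - z ^ 10 - z ^ 19 - z ^ 2)) * ((7) + (1) * z + (-2) * z ^ 2 + (1) * z ^ 3 + (2) * z ^ 4 + (-4) * z ^ 5 + (2) * z ^ 6 + (3) * z ^ 7 + (-5) * z ^ 8 + (1) * z ^ 9 + (5) * z ^ 10 + (1) * z ^ 11) = ((14 : ℕ) : K) := by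
      push_cast
      linear_combination ((-14) + (-14) * z + (16) * z ^ 3 + (12) * z ^ 4 + (2) * z ^ 6 + (12) * z ^ 7 + (-14) * z ^ 9 + (-28) * z ^ 10 + (-14) * z ^ 11 + (-2) * z ^ 14 + (2) * z ^ 15 + (14) * z ^ 16 + (12) * z ^ 17 + (2) * z ^ 18) * hphi
    rw [← hcert, ← hw2, ← hw5, hcontra, sub_self, zero_mul]
  have hrne26 : w2 ≠ w6 := by
    intro hcontra
    apply hcast 14 (by norm_num) (by norm_num)
    have hcert : (((2 + z ^ 2 + z ^ 19 - z ^ 8 - z ^ 13 - z ^ 10 - z ^ 11) : K) - (2 + z ^ 10 + z ^ 11 - z ^ 19 - z ^ 2 - z ^ 8 - z ^ 13)) * ((-4) * z + (1) * z ^ 2 + (3) * z ^ 3 + (-1) * z ^ 4 + (-5) * z ^ 5 + (6) * z ^ 6 + (2) * z ^ 7 + (-8) * z ^ 8 + (3) * z ^ 9 + (1) * z ^ 10 + (-4) * z ^ 11) = ((14 : ℕ) : K) := by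
      push_cast
      linear_combination ((-14) + (-14) * z + (-14) * z ^ 2 + (-8) * z ^ 3 + (-6) * z ^ 4 + (6) * z ^ 6 + (8) * z ^ 7 + (14) * z ^ 8 + (20) * z ^ 9 + (8) * z ^ 10 + (8) * z ^ 11 + (6) * z ^ 12 + (-6) * z ^ 14 + (-8) * z ^ 15 + (-6) * z ^ 17 + (-8) * z ^ 18) * hphi
    rw [← hcert, ← hw2, ← hw6, hcontra, sub_self, zero_mul]
  have hrne34 : w3 ≠ w4 := by
    intro hcontra
    apply hcast 14 (by norm_num) (by norm_num)
    have hcert : (((2 + z ^ 4 + z ^ 17 - z ^ 16 - z ^ 5 - z ^ 20 - z) : K) - (2 + z ^ 5 + z ^ 16 - z ^ 20 - z - z ^ 4 - z ^ 17)) * ((7) + (3) * z + (1) * z ^ 2 + (3) * z ^ 3 + (-1) * z ^ 4 + (-5) * z ^ 5 + (-1) * z ^ 6 + (2) * z ^ 7 + (-1) * z ^ 8 + (3) * z ^ 9 + (1) * z ^ 10 + (-4) * z ^ 11) = ((14 : ℕ) : K) := by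
      push_cast
      linear_combination ((-14) + (-14) * z + (-14) * z ^ 2 + (14) * z ^ 4 + (6) * z ^ 5 + (2) * z ^ 6 + (6) * z ^ 7 + (6) * z ^ 8 + (2) * z ^ 9 + (-8) * z ^ 10 + (-8) * z ^ 11 + (2) * z ^ 12 + (6) * z ^ 13 + (6) * z ^ 14 + (2) * z ^ 15 + (-8) * z ^ 16) * hphi
    rw [← hcert, ← hw3, ← hw4, hcontra, sub_self, zero_mul]
  have hrne35 : w3 ≠ w5 := by
    intro hcontra
    apply hcast 7 (by norm_num) (by norm_num)
    have hcert : (((2 + z ^ 4 + z ^ 17 - z ^ 16 - z ^ 5 - z ^ 20 - z) : K) - (2 + z ^ 8 + z ^ 13 - z ^ 11 - z ^ 10 - z ^ 19 - z ^ 2)) * ((-21) + (2) * z + (10) * z ^ 2 + (-12) * z ^ 3 + (4) * z ^ 4 + (6) * z ^ 5 + (-10) * z ^ 6 + (-8) * z ^ 7 + (18) * z ^ 8 + (2) * z ^ 9 + (-4) * z ^ 10 + (16) * z ^ 11) = ((7 : ℕ) : K) := by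
      push_cast
      linear_combination ((-7) + (14) * z + (-9) * z ^ 2 + (-10) * z ^ 3 + (-30) * z ^ 4 + (14) * z ^ 6 + (14) * z ^ 7 + (21) * z ^ 8 + (12) * z ^ 9 + (-12) * z ^ 10 + (-26) * z ^ 11 + (-16) * z ^ 12 + (14) * z ^ 13 + (14) * z ^ 14 + (14) * z ^ 16 + (-2) * z ^ 17 + (4) * z ^ 18 + (-16) * z ^ 19) * hphi
    rw [← hcert, ← hw3, ← hw5, hcontra, sub_self, zero_mul]
  have hrne36 : w3 ≠ w6 := by
    intro hcontra
    apply hcast 21 (by norm_num) (by norm_num)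
    have hcert : (((2 + z ^ 4 + z ^ 17 - z ^ 16 - z ^ 5 - z ^ 20 - z) : K) - (2 + z ^ 10 + z ^ 11 - z ^ 19 - z ^ 2 - z ^ 8 - z ^ 13)) * ((7) + (2) * z + (-4) * z ^ 2 + (2) * z ^ 3 + (4) * z ^ 4 + (-8) * z ^ 5 + (4) * z ^ 6 + (6) * z ^ 7 + (-10) * z ^ 8 + (2) * z ^ 9 + (-4) * z ^ 10 + (-12) * z ^ 11) = ((21 : ℕ) : K) := by
      push_cast
      linear_combination ((-21) + (-28) * z + (-23) * z ^ 2 + (4) * z ^ 3 + (12) * z ^ 4 + (14) * z ^ 7 + (35) * z ^ 8 + (30) * z ^ 9 + (-2) * z ^ 10 + (-16) * z ^ 11 + (-12) * z ^ 12 + (-14) * z ^ 15 + (-14) * z ^ 16 + (-2) * z ^ 17 + (4) * z ^ 18 + (12) * z ^ 19) * hphi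
    rw [← hcert, ← hw3, ← hw6, hcontra, sub_self, zero_mul]
  have hrne45 : w4 ≠ w5 := by
    intro hcontra
    apply hcast 7 (by norm_num) (by norm_num)
    have hcert : (((2 + z ^ 5 + z ^ 16 - z ^ 20 - z - z ^ 4 - z ^ 17) : K) - (2 + z ^ 8 + z ^ 13 - z ^ 11 - z ^ 10 - z ^ 19 - z ^ 2)) * ((7) + (-6) * z + (12) * z ^ 2 + (-6) * z ^ 3 + (2) * z ^ 4 + (-4) * z ^ 5 + (2) * z ^ 6 + (-4) * z ^ 7 + (2) * z ^ 8 + (8) * z ^ 9 + (-2) * z ^ 10 + (8) * z ^ 11) = ((7 : ℕ) : K) := by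
      push_cast
      linear_combination ((-7) + (-14) * z + (-1) * z ^ 2 + (-12) * z ^ 3 + (6) * z ^ 4 + (-2) * z ^ 5 + (4) * z ^ 6 + (12) * z ^ 7 + (5) * z ^ 8 + (10) * z ^ 9 + (-8) * z ^ 10 + (6) * z ^ 11 + (-4) * z ^ 12 + (12) * z ^ 13 + (-2) * z ^ 14 + (4) * z ^ 15 + (-2) * z ^ 16 + (-8) * z ^ 17 + (2) * z ^ 18 + (-8) * z ^ 19) * hphi
    rw [← hcert, ← hw4, ← hw5, hcontra, sub_self, zero_mul]
  have hrne46 : w4 ≠ w6 := by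
    intro hcontra
    apply hcast 7 (by norm_num) (by norm_num)
    have hcert : (((2 + z ^ 5 + z ^ 16 - z ^ 20 - z - z ^ 4 - z ^ 17) : K) - (2 + z ^ 10 + z ^ 11 - z ^ 19 - z ^ 2 - z ^ 8 - z ^ 13)) * ((-7) + (-10) * z + (6) * z ^ 2 + (4) * z ^ 3 + (-6) * z ^ 4 + (-2) * z ^ 5 + (8) * z ^ 6 + (-2) * z ^ 7 + (-6) * z ^ 8 + (4) * z ^ 9 + (6) * z ^ 10 + (4) * z ^ 11) = ((7 : ℕ) : K) := by
      push_cast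
      linear_combination ((-7) + (3) * z ^ 2 + (-6) * z ^ 3 + (-4) * z ^ 4 + (6) * z ^ 5 + (2) * z ^ 6 + (-8) * z ^ 7 + (-15) * z ^ 8 + (-8) * z ^ 9 + (2) * z ^ 10 + (16) * z ^ 11 + (20) * z ^ 12 + (6) * z ^ 13 + (-8) * z ^ 14 + (2) * z ^ 15 + (6) * z ^ 16 + (-4) * z ^ 17 + (-6) * z ^ 18 + (-4) * z ^ 19) * hphi
    rw [← hcert, ← hw4, ← hw6, hcontra, sub_self, zero_mul]
  have hrne56 : w5 ≠ w6 := by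
    intro hcontra
    apply hcast 14 (by norm_num) (by norm_num)
    have hcert : (((2 + z ^ 8 + z ^ 13 - z ^ 11 - z ^ 10 - z ^ 19 - z ^ 2) : K) - (2 + z ^ 10 + z ^ 11 - z ^ 19 - z ^ 2 - z ^ 8 - z ^ 13)) * ((7) + (-5) * z + (3) * z ^ 2 + (2) * z ^ 3 + (-3) * z ^ 4 + (-1) * z ^ 5 + (4) * z ^ 6 + (-1) * z ^ 7 + (-3) * z ^ 8 + (2) * z ^ 9 + (-4) * z ^ 10 + (-5) * z ^ 11) = ((14 : ℕ) : K) := by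
      push_cast
      linear_combination ((-14) + (-14) * z + (-14) * z ^ 2 + (14) * z ^ 7 + (28) * z ^ 8 + (18) * z ^ 9 + (-4) * z ^ 10 + (-18) * z ^ 11 + (-10) * z ^ 12) * hphi
    rw [← hcert, ← hw5, ← hw6, hcontra, sub_self, zero_mul]
  have hfrob1 : w1 ^ l = w1 := by
    rw [hw1]
    have e : (2 + z + z ^ 20 - z ^ 4 - z ^ 17 - z ^ 5 - z ^ 16 : K) ^ l = (frobenius K l) (2 + z + z ^ 20 - z ^ 4 - z ^ 17 - z ^ 5 - z ^ 16) := rfl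
    rw [e]
    simp only [map_add, map_sub, map_pow, map_ofNat, hfz]
    simp only [← pow_mul]
    norm_num
    rw [hred 80, hred 100, hred 320, hred 340, hred 400]
    norm_num
    try ring
  have hfrob2 : w2 ^ l = w2 := by
    rw [hw2]
    have e : (2 + z ^ 2 + z ^ 19 - z ^ 8 - z ^ 13 - z ^ 10 - z ^ 11 : K) ^ l = (frobenius K l) (2 + z ^ 2 + z ^ 19 - z ^ 8 - z ^ 13 - z ^ 10 - z ^ 11) := rfl
    rw [e]
    simp only [map_add, map_sub, map_pow, map_ofNat, hfz]
    simp only [← pow_mul]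
    norm_num
    rw [hred 40, hred 160, hred 200, hred 220, hred 260, hred 380]
    norm_num
    try ring
  have hfrob3 : w3 ^ l = w3 := by
    rw [hw3]
    have e : (2 + z ^ 4 + z ^ 17 - z ^ 16 - z ^ 5 - z ^ 20 - z : K) ^ l = (frobenius K l) (2 + z ^ 4 + z ^ 17 - z ^ 16 - z ^ 5 - z ^ 20 - z) := rfl
    rw [e]
    simp only [map_add, map_sub, map_pow, map_ofNat, hfz]
    simp only [← pow_mul]
    norm_num
    rw [hred 80, hred 100, hred 320, hred 340, hred 400]
    norm_num
    try ring
  have hfrob4 : w4 ^ l = w4 := by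
    rw [hw4]
    have e : (2 + z ^ 5 + z ^ 16 - z ^ 20 - z - z ^ 4 - z ^ 17 : K) ^ l = (frobenius K l) (2 + z ^ 5 + z ^ 16 - z ^ 20 - z - z ^ 4 - z ^ 17) := rfl
    rw [e]
    simp only [map_add, map_sub, map_pow, map_ofNat, hfz]
    simp only [← pow_mul]
    norm_num
    rw [hred 80, hred 100, hred 320, hred 340, hred 400]
    norm_num
    try ring
  have hfrob5 : w5 ^ l = w5 := by
    rw [hw5]
    have e : (2 + z ^ 8 + z ^ 13 - z ^ 11 - z ^ 10 - z ^ 19 - z ^ 2 : K) ^ l = (frobenius K l) (2 + z ^ 8 + z ^ 13 - z ^ 11 - z ^ 10 - z ^ 19 - z ^ 2) := rfl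
    rw [e]
    simp only [map_add, map_sub, map_pow, map_ofNat, hfz]
    simp only [← pow_mul]
    norm_num
    rw [hred 40, hred 160, hred 200, hred 220, hred 260, hred 380]
    norm_num
    try ring
  have hfrob6 : w6 ^ l = w6 := by
    rw [hw6]
    have e : (2 + z ^ 10 + z ^ 11 - z ^ 19 - z ^ 2 - z ^ 8 - z ^ 13 : K) ^ l = (frobenius K l) (2 + z ^ 10 + z ^ 11 - z ^ 19 - z ^ 2 - z ^ 8 - z ^ 13) := rfl
    rw [e]
    simp only [map_add, map_sub, map_pow, map_ofNat, hfz]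
    simp only [← pow_mul]
    norm_num
    rw [hred 40, hred 160, hred 200, hred 220, hred 260, hred 380]
    norm_num
    try ring
  obtain ⟨y1, hy1⟩ := aux_mem_range l φ hfrob1
  have hsy1 : y1 ^ 6 - 11 * y1 ^ 5 + 30 * y1 ^ 4 - 15 * y1 ^ 3 - 10 * y1 ^ 2 + 5 * y1 + 1 = 0 := by
    apply φ.injective
    rw [map_zero]
    push_cast [map_add, map_sub, map_mul, map_pow, map_one, map_ofNat, hy1]
    linear_combination hroot1
  obtain ⟨y2, hy2⟩ := aux_mem_range l φ hfrob2
  have hsy2 : y2 ^ 6 - 11 * y2 ^ 5 + 30 * y2 ^ 4 - 15 * y2 ^ 3 - 10 * y2 ^ 2 + 5 * y2 + 1 = 0 := by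
    apply φ.injective
    rw [map_zero]
    push_cast [map_add, map_sub, map_mul, map_pow, map_one, map_ofNat, hy2]
    linear_combination hroot2
  obtain ⟨y3, hy3⟩ := aux_mem_range l φ hfrob3
  have hsy3 : y3 ^ 6 - 11 * y3 ^ 5 + 30 * y3 ^ 4 - 15 * y3 ^ 3 - 10 * y3 ^ 2 + 5 * y3 + 1 = 0 := by
    apply φ.injective
    rw [map_zero]
    push_cast [map_add, map_sub, map_mul, map_pow, map_one, map_ofNat, hy3]
    linear_combination hroot3
  obtain ⟨y4, hy4⟩ := aux_mem_range l φ hfrob4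
  have hsy4 : y4 ^ 6 - 11 * y4 ^ 5 + 30 * y4 ^ 4 - 15 * y4 ^ 3 - 10 * y4 ^ 2 + 5 * y4 + 1 = 0 := by
    apply φ.injective
    rw [map_zero]
    push_cast [map_add, map_sub, map_mul, map_pow, map_one, map_ofNat, hy4]
    linear_combination hroot4
  obtain ⟨y5, hy5⟩ := aux_mem_range l φ hfrob5
  have hsy5 : y5 ^ 6 - 11 * y5 ^ 5 + 30 * y5 ^ 4 - 15 * y5 ^ 3 - 10 * y5 ^ 2 + 5 * y5 + 1 = 0 := by
    apply φ.injective
    rw [map_zero]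
    push_cast [map_add, map_sub, map_mul, map_pow, map_one, map_ofNat, hy5]
    linear_combination hroot5
  obtain ⟨y6, hy6⟩ := aux_mem_range l φ hfrob6
  have hsy6 : y6 ^ 6 - 11 * y6 ^ 5 + 30 * y6 ^ 4 - 15 * y6 ^ 3 - 10 * y6 ^ 2 + 5 * y6 + 1 = 0 := by
    apply φ.injective
    rw [map_zero]
    push_cast [map_add, map_sub, map_mul, map_pow, map_one, map_ofNat, hy6]
    linear_combination hroot6
  have hyne12 : y1 ≠ y2 := by
    intro h
    exact hrne12 (by rw [← hy1, ← hy2, h])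
  have hyne13 : y1 ≠ y3 := by
    intro h
    exact hrne13 (by rw [← hy1, ← hy3, h])
  have hyne14 : y1 ≠ y4 := by
    intro h
    exact hrne14 (by rw [← hy1, ← hy4, h])
  have hyne15 : y1 ≠ y5 := by
    intro h
    exact hrne15 (by rw [← hy1, ← hy5, h])
  have hyne16 : y1 ≠ y6 := by
    intro h
    exact hrne16 (by rw [← hy1, ← hy6, h])
  have hyne23 : y2 ≠ y3 := by
    intro h
    exact hrne23 (by rw [← hy2, ← hy3, h])
  have hyne24 : y2 ≠ y4 := by
    intro h
    exact hrne24 (by rw [← hy2, ← hy4, h])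
  have hyne25 : y2 ≠ y5 := by
    intro h
    exact hrne25 (by rw [← hy2, ← hy5, h])
  have hyne26 : y2 ≠ y6 := by
    intro h
    exact hrne26 (by rw [← hy2, ← hy6, h])
  have hyne34 : y3 ≠ y4 := by
    intro h
    exact hrne34 (by rw [← hy3, ← hy4, h])
  have hyne35 : y3 ≠ y5 := by
    intro h
    exact hrne35 (by rw [← hy3, ← hy5, h])
  have hyne36 : y3 ≠ y6 := by
    intro h
    exact hrne36 (by rw [← hy3, ← hy6, h])
  have hyne45 : y4 ≠ y5 := by
    intro h
    exact hrne45 (by rw [← hy4, ← hy5, h])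
  have hyne46 : y4 ≠ y6 := by
    intro h
    exact hrne46 (by rw [← hy4, ← hy6, h])
  have hyne56 : y5 ≠ y6 := by
    intro h
    exact hrne56 (by rw [← hy5, ← hy6, h])
  set q : (ZMod l)[X] := X ^ 2 - X + 1 with hqdef
  set s : (ZMod l)[X] := X ^ 6 - 11 * X ^ 5 + 30 * X ^ 4 - 15 * X ^ 3 - 10 * X ^ 2 + 5 * X + 1
    with hsdef
  have hfactor : f0poly (ZMod l) = q * s := rfl
  have hq2 : q.natDegree = 2 := by rw [hqdef]; compute_degree!
  have hs6 : s.natDegree = 6 := by rw [hsdef]; compute_degree!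
  have hq0 : q ≠ 0 := fun h => by rw [h, natDegree_zero] at hq2; omega
  have hs0 : s ≠ 0 := fun h => by rw [h, natDegree_zero] at hs6; omega
  have hf0 : f0poly (ZMod l) ≠ 0 := by rw [hfactor]; exact mul_ne_zero hq0 hs0
  have hqnr : ∀ x : ZMod l, x ^ 2 - x + 1 ≠ 0 := by
    intro x hx
    have hx3 : x ^ 3 = -1 := by linear_combination (x + 1) * hx
    have hx0 : x ≠ 0 := by
      intro h
      rw [h] at hx
      norm_num at hx
    obtain ⟨c, hc⟩ : ∃ c, l - 1 = 3 * c + 1 := ⟨(l - 1) / 3, by omega⟩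
    have hpow : x ^ (l - 1) = 1 := ZMod.pow_card_sub_one_eq_one hx0
    rw [hc, pow_add, pow_mul, hx3, pow_one] at hpow
    rcases neg_one_pow_eq_or (ZMod l) c with h | h <;> rw [h] at hpow
    · rw [one_mul] at hpow
      rw [hpow] at hx
      norm_num at hx
    · rw [neg_one_mul] at hpow
      have hxm : x = -1 := by linear_combination -hpow
      rw [hxm] at hx
      have h3' : ((3 : ℕ) : ZMod l) = 0 := by push_cast; linear_combination hx
      rw [ZMod.natCast_eq_zero_iff] at h3'
      have := Nat.le_of_dvd (by norm_num) h3'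
      omega
  have hqroots : q.roots = 0 := by
    refine Multiset.eq_zero_of_forall_notMem fun x hx => ?_
    have hroot := (Polynomial.mem_roots hq0).mp hx
    apply hqnr x
    have heq : q.eval x = 0 := hroot
    rw [hqdef] at heq
    simpa using heq
  have hroots_eq : (f0poly (ZMod l)).roots = s.roots := by
    rw [hfactor, Polynomial.roots_mul (by rw [← hfactor]; exact hf0), hqroots, zero_add]
  have hcard_le : Multiset.card s.roots ≤ 6 := by
    have := Polynomial.card_roots' s
    omega
  have hymem1 : y1 ∈ (f0poly (ZMod l)).roots.toFinset := by
    rw [Multiset.mem_toFinset, hroots_eq, Polynomial.mem_roots hs0]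
    show s.eval y1 = 0
    rw [hsdef]
    simp only [eval_add, eval_sub, eval_mul, eval_pow, eval_X, eval_one, eval_ofNat]
    linear_combination hsy1
  have hymem2 : y2 ∈ (f0poly (ZMod l)).roots.toFinset := by
    rw [Multiset.mem_toFinset, hroots_eq, Polynomial.mem_roots hs0]
    show s.eval y2 = 0
    rw [hsdef]
    simp only [eval_add, eval_sub, eval_mul, eval_pow, eval_X, eval_one, eval_ofNat]
    linear_combination hsy2
  have hymem3 : y3 ∈ (f0poly (ZMod l)).roots.toFinset := by
    rw [Multiset.mem_toFinset, hroots_eq, Polynomial.mem_roots hs0]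
    show s.eval y3 = 0
    rw [hsdef]
    simp only [eval_add, eval_sub, eval_mul, eval_pow, eval_X, eval_one, eval_ofNat]
    linear_combination hsy3
  have hymem4 : y4 ∈ (f0poly (ZMod l)).roots.toFinset := by
    rw [Multiset.mem_toFinset, hroots_eq, Polynomial.mem_roots hs0]
    show s.eval y4 = 0
    rw [hsdef]
    simp only [eval_add, eval_sub, eval_mul, eval_pow, eval_X, eval_one, eval_ofNat]
    linear_combination hsy4
  have hymem5 : y5 ∈ (f0poly (ZMod l)).roots.toFinset := by
    rw [Multiset.mem_toFinset, hroots_eq, Polynomial.mem_roots hs0]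
    show s.eval y5 = 0
    rw [hsdef]
    simp only [eval_add, eval_sub, eval_mul, eval_pow, eval_X, eval_one, eval_ofNat]
    linear_combination hsy5
  have hymem6 : y6 ∈ (f0poly (ZMod l)).roots.toFinset := by
    rw [Multiset.mem_toFinset, hroots_eq, Polynomial.mem_roots hs0]
    show s.eval y6 = 0
    rw [hsdef]
    simp only [eval_add, eval_sub, eval_mul, eval_pow, eval_X, eval_one, eval_ofNat]
    linear_combination hsy6
  set TF : Finset (ZMod l) := {y1, y2, y3, y4, y5, y6} with hTF
  have hTFsub : TF ⊆ (f0poly (ZMod l)).roots.toFinset := by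
    intro a ha
    rw [hTF] at ha
    simp only [Finset.mem_insert, Finset.mem_singleton] at ha
    rcases ha with h|h|h|h|h|h <;> rw [h]
    exacts [hymem1, hymem2, hymem3, hymem4, hymem5, hymem6]
  have hTFcard : TF.card = 6 := by
    rw [hTF, Finset.card_insert_of_notMem (by simp [hyne12, hyne13, hyne14, hyne15, hyne16]),
      Finset.card_insert_of_notMem (by simp [hyne23, hyne24, hyne25, hyne26]),
      Finset.card_insert_of_notMem (by simp [hyne34, hyne35, hyne36]),
      Finset.card_insert_of_notMem (by simp [hyne45, hyne46]),
      Finset.card_insert_of_notMem (by simp [hyne56]), Finset.card_singleton]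
  have hc6 : Multiset.card (f0poly (ZMod l)).roots ≤ 6 := by rw [hroots_eq]; exact hcard_le
  have hcard_finset_le : (f0poly (ZMod l)).roots.toFinset.card ≤ 6 :=
    le_trans (Multiset.toFinset_card_le _) hc6
  have hcard : (f0poly (ZMod l)).roots.toFinset.card = 6 := by
    have := Finset.card_le_card hTFsub
    omega
  refine ⟨hcard, ?_⟩
  intro x hxroot
  have hx_mem : x ∈ (f0poly (ZMod l)).roots := (Polynomial.mem_roots hf0).mpr hxroot
  have hx_fin : x ∈ (f0poly (ZMod l)).roots.toFinset := Multiset.mem_toFinset.mpr hx_mem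
  rw [← Polynomial.count_roots]
  have h1le : 1 ≤ (f0poly (ZMod l)).roots.count x := Multiset.one_le_count_iff_mem.mpr hx_mem
  by_contra hne1
  have h2le : 2 ≤ (f0poly (ZMod l)).roots.count x := by omega
  have hle : (x ::ₘ (f0poly (ZMod l)).roots.dedup) ≤ (f0poly (ZMod l)).roots := by
    rw [Multiset.le_iff_count]
    intro a
    by_cases ha : a = x
    · subst ha
      rw [Multiset.count_cons_self, Multiset.count_dedup, if_pos hx_mem]
      omega
    · rw [Multiset.count_cons_of_ne ha, Multiset.count_dedup]
      by_cases hmem : a ∈ (f0poly (ZMod l)).roots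
      · rw [if_pos hmem]
        exact Multiset.one_le_count_iff_mem.mpr hmem
      · rw [if_neg hmem]
        exact Nat.zero_le _
  have hcard_le' := Multiset.card_le_card hle
  rw [Multiset.card_cons] at hcard_le'
  have hded : (f0poly (ZMod l)).roots.dedup.card = (f0poly (ZMod l)).roots.toFinset.card :=
    (Multiset.card_toFinset _).symm
  omega
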